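/- arXiv:2304.00139 — 5 statements merged into one kernel-verified Lean document; each statement's English description precedes it below -/
import Mathlib

section
/- Let cl be a closure operator on a set I and let B ⊇ C be finite subsets of I such that B is not contained in cl(C). Then there exists some b ∈ B \ cl(C) which is minimal in B over C, i.e., for every b' ∈ (B ∩ cl({b} ∪ C)) \ cl(C), we have b ∈ cl({b'} ∪ C). -/
/-- A closure operator on a set (type) `I`. -/
structure IsClosureOp {I : Type*} (cl : Set I → Set I) : Prop where
  extensive : ∀ A, A ⊆ cl A
  mono : ∀ A B : Set I, A ⊆ B → cl A ⊆ cl B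
  idem : ∀ A, cl (cl A) = cl A

/-- The independence relation derived from `cl`: `A ⫫_C B`. -/
def Indep {I : Type*} (cl : Set I → Set I) (A C B : Set I) : Prop :=
  A ∩ cl (B ∪ C) ⊆ cl C ∧ B ∩ cl (A ∪ C) ⊆ cl C

/-- `b` is minimal in `B` over `C` (with respect to `cl`). -/
def MinimalOver {I : Type*} (cl : Set I → Set I) (B C : Set I) (b : I) : Prop :=
  b ∈ B \ cl C ∧ ∀ b' ∈ (B ∩ cl (insert b C)) \ cl C, b ∈ cl (insert b' C)

/-! Since `B` is finite, we can choose `b ∈ B \ cl C` whose trace `B ∩ cl (insert b C)` is minimal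
under inclusion. Any `b' ∈ (B ∩ cl (insert b C)) \ cl C` has a trace contained in
that of `b`, so by minimality the two traces agree, and `b`, which lies in its own trace, lies in
`cl (insert b' C)`. -/

namespace IsClosureOp

variable {I : Type*} {cl : Set I → Set I}

theorem closure_subset_of_subset_closure (hcl : IsClosureOp cl) {A D : Set I} (h : A ⊆ cl D) :
    cl A ⊆ cl D :=
  hcl.idem D ▸ hcl.mono _ _ h

theorem closure_insert_subset_of_mem (hcl : IsClosureOp cl) {b b' : I} {C : Set I}
    (h : b' ∈ cl (insert b C)) : cl (insert b' C) ⊆ cl (insert b C) :=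
  hcl.closure_subset_of_subset_closure <| Set.insert_subset h <|
    (Set.subset_insert b C).trans (hcl.extensive _)

theorem minimalOver_of_minimalFor (hcl : IsClosureOp cl) {B C : Set I} {b : I}
    (hb : MinimalFor (· ∈ B \ cl C) (fun x ↦ B ∩ cl (insert x C)) b) : MinimalOver cl B C b := by
  refine ⟨hb.1, fun b' ⟨⟨hb'B, hb'b⟩, hb'C⟩ ↦ ?_⟩
  have htrace : B ∩ cl (insert b C) ⊆ B ∩ cl (insert b' C) :=
    hb.2 ⟨hb'B, hb'C⟩ <| Set.inter_subset_inter_right B (hcl.closure_insert_subset_of_mem hb'b)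
  exact (htrace ⟨hb.1.1, hcl.extensive _ (Set.mem_insert b C)⟩).2

end IsClosureOp

theorem stmt_0_general {I : Type*} (cl : Set I → Set I) (hcl : IsClosureOp cl)
    (B C : Set I) (hB : B.Finite)
    (h : ¬ B ⊆ cl C) :
    ∃ b, MinimalOver cl B C b := by
  have hne : (B \ cl C).Nonempty := Set.nonempty_of_not_subset h
  obtain ⟨b, hb⟩ := (hB.subset Set.sdiff_subset).exists_minimalFor
    (fun x ↦ B ∩ cl (insert x C)) _ hne
  exact ⟨b, hcl.minimalOver_of_minimalFor hb⟩

/-- If `B ⊇ C` are finite and `B ⊄ cl C`, there is `b ∈ B \ cl C` minimal in `B` over `C`. -/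
theorem stmt_0 {I : Type*} (cl : Set I → Set I) (hcl : IsClosureOp cl)
    (B C : Set I) (hB : B.Finite) (hC : C.Finite) (hCB : C ⊆ B)
    (h : ¬ B ⊆ cl C) :
    ∃ b, MinimalOver cl B C b :=
  stmt_0_general cl hcl B C hB h
end

section
/- Let cl be a closure operator on I with derived independence relation ⫫. Let A, B, C be finite subsets of I with A ⊇ C and B ⊇ C, and suppose b ∈ B \ cl(C) is minimal in B over C. If A ⫫_C {b} and A ⫫_{{b} ∪ C} B, then A ⫫_C B (weak transitivity). -/
namespace IsClosureOp

variable {I : Type*} {cl : Set I → Set I}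

theorem cl_subset_cl_of_subset_cl (hcl : IsClosureOp cl) {S T : Set I} (h : S ⊆ cl T) :
    cl S ⊆ cl T :=
  hcl.idem T ▸ hcl.mono _ _ h

theorem mem_cl_union_of_mem_cl_insert (hcl : IsClosureOp cl) {A C : Set I} {x y : I}
    (hy : y ∈ cl (A ∪ C)) (hx : x ∈ cl (insert y C)) : x ∈ cl (A ∪ C) := by
  have hsub : insert y C ⊆ cl (A ∪ C) :=
    Set.insert_subset hy (Set.subset_union_right.trans (hcl.extensive _))
  exact hcl.cl_subset_cl_of_subset_cl hsub hx

end IsClosureOp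

section WeakTransitivity

variable {I : Type*} {cl : Set I → Set I} {A B C : Set I} {b : I}

theorem inter_cl_union_subset_of_indep_insert (hb : b ∈ B) (h1 : Indep cl A C {b})
    (h2 : Indep cl A (insert b C) B) : A ∩ cl (B ∪ C) ⊆ cl C := by
  have hBC : B ∪ insert b C = B ∪ C := by
    rw [Set.union_insert, Set.insert_eq_of_mem (Set.mem_union_left C hb)]
  intro a ha
  have hab : a ∈ cl (insert b C) := h2.1 ⟨ha.1, hBC ▸ ha.2⟩
  exact h1.1 ⟨ha.1, Set.singleton_union ▸ hab⟩

theorem inter_cl_union_subset_of_minimalOver (hcl : IsClosureOp cl)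
    (hmin : MinimalOver cl B C b) (h1 : Indep cl A C {b}) (h2 : Indep cl A (insert b C) B) :
    B ∩ cl (A ∪ C) ⊆ cl C := by
  obtain ⟨⟨-, hbC⟩, hminimal⟩ := hmin
  rintro b' ⟨hb'B, hb'A⟩
  by_contra hb'C
  have hb'b : b' ∈ cl (insert b C) :=
    h2.2 ⟨hb'B, hcl.mono _ _ (Set.union_subset_union_right A (Set.subset_insert b C)) hb'A⟩
  have hbb' : b ∈ cl (insert b' C) := hminimal b' ⟨⟨hb'B, hb'b⟩, hb'C⟩
  exact hbC (h1.2 ⟨rfl, hcl.mem_cl_union_of_mem_cl_insert hb'A hbb'⟩)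

end WeakTransitivity

theorem stmt_3_general {I : Type*} (cl : Set I → Set I) (hcl : IsClosureOp cl)
    (A B C : Set I) (b : I)
    (hmin : MinimalOver cl B C b)
    (h1 : Indep cl A C {b}) (h2 : Indep cl A (insert b C) B) :
    Indep cl A C B :=
  ⟨inter_cl_union_subset_of_indep_insert hmin.1.1 h1 h2,
    inter_cl_union_subset_of_minimalOver hcl hmin h1 h2⟩

/-- Weak transitivity of the derived independence relation. -/
theorem stmt_3 {I : Type*} (cl : Set I → Set I) (hcl : IsClosureOp cl)
    (A B C : Set I) (b : I)
    (hA : A.Finite) (hB : B.Finite) (hC : C.Finite)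
    (hCA : C ⊆ A) (hCB : C ⊆ B)
    (hmin : MinimalOver cl B C b)
    (h1 : Indep cl A C {b}) (h2 : Indep cl A (insert b C) B) :
    Indep cl A C B :=
  stmt_3_general cl hcl A B C b hmin h1 h2
end

section
/- Let P ↷ I be a group action and cl an invariant closure operator on I with derived independence relation ⫫. Suppose that for any finite C ⊆ I and a, b ∈ I there is some a' ≅_C a with {a'} ⫫_C {b}. Then for any finite B, C ⊆ I and a ∈ I, there is some a' ≅_C a such that {a'} ⫫_C B. -/
/-- `a' ≅_C a`: some `π ∈ P` fixes `C` pointwise and sends `a` to `a'`. -/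
def ConjOver (P : Type*) [Group P] {I : Type*} [MulAction P I] (C : Set I) (a a' : I) : Prop :=
  ∃ π : P, (∀ c ∈ C, π • c = c) ∧ π • a = a'

/-- `A' ≅_C A` for sets: some `π ∈ P` fixes `C` pointwise with `π[A] = A'`. -/
def ConjSetOver (P : Type*) [Group P] {I : Type*} [MulAction P I] (C A A' : Set I) : Prop :=
  ∃ π : P, (∀ c ∈ C, π • c = c) ∧ (fun x => π • x) '' A = A'

/-- `cl` is invariant under the action of `P`: `π[cl A] = cl (π[A])`. -/
def ClInvariant (P : Type*) [Group P] {I : Type*} [MulAction P I] (cl : Set I → Set I) : Prop :=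
  ∀ (π : P) (A : Set I), (fun x => π • x) '' cl A = cl ((fun x => π • x) '' A)


-- aux lemmas
lemma image_of_fix {P : Type*} [Group P] {I : Type*} [MulAction P I]
    {π : P} {C : Set I} (h : ∀ c ∈ C, π • c = c) : (fun x => π • x) '' C = C := by
  ext x
  constructor
  · rintro ⟨c, hc, rfl⟩
    simpa [h c hc] using hc
  · intro hx
    exact ⟨x, hx, h x hx⟩

lemma indep_image {P : Type*} [Group P] {I : Type*} [MulAction P I]
    {cl : Set I → Set I} (hinv : ClInvariant P cl) (π : P) {A C B : Set I}
    (h : Indep cl A C B) :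
    Indep cl ((fun x => π • x) '' A) ((fun x => π • x) '' C) ((fun x => π • x) '' B) := by
  have hinj : Function.Injective (fun x : I => π • x) := MulAction.injective π
  constructor
  · have := Set.image_mono (f := fun x => π • x) h.1
    rw [Set.image_inter hinj, hinv, Set.image_union] at this
    rwa [hinv] at this
  · have := Set.image_mono (f := fun x => π • x) h.2
    rw [Set.image_inter hinj, hinv, Set.image_union] at this
    rwa [hinv] at this

lemma exists_min {α : Type*} (r : α → α → Prop)
    (hrefl : ∀ x, r x x)
    (htrans : ∀ x y z, r x y → r y z → r x z) :
    ∀ S : Finset α, S.Nonempty → ∃ b ∈ S, ∀ b' ∈ S, r b' b → r b b' := by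
  classical
  intro S
  induction S using Finset.strongInduction with
  | _ S ih =>
    intro hS
    obtain ⟨b, hb⟩ := hS
    by_cases hgood : ∀ b' ∈ S, r b' b → r b b'
    · exact ⟨b, hb, hgood⟩
    · push_neg at hgood
      obtain ⟨c, hc, hcb, hbc⟩ := hgood
      have hsub : S.filter (fun x => r x c) ⊂ S :=
        Finset.filter_ssubset.mpr ⟨b, hb, hbc⟩
      obtain ⟨m, hm, hmin⟩ := ih _ hsub ⟨c, Finset.mem_filter.mpr ⟨hc, hrefl c⟩⟩
      have hmc : r m c := (Finset.mem_filter.mp hm).2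
      refine ⟨m, Finset.filter_subset _ _ hm, ?_⟩
      intro x hx hxm
      exact hmin x (Finset.mem_filter.mpr ⟨hx, htrans x m c hxm hmc⟩) hxm

lemma indep_of_subset_cl {I : Type*} {cl : Set I → Set I} (hcl : IsClosureOp cl)
    {B C : Set I} (hBC : B ⊆ cl C) (a : I) : Indep cl {a} C B := by
  have hcls : cl (B ∪ C) ⊆ cl C := by
    have : B ∪ C ⊆ cl C := Set.union_subset hBC (hcl.extensive C)
    have := hcl.mono _ _ this
    rwa [hcl.idem] at this
  constructor
  · exact fun x hx => hcls hx.2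
  · exact fun x hx => hBC hx.1

lemma wtrans {I : Type*} {cl : Set I → Set I} (hcl : IsClosureOp cl)
    {a b : I} {B C : Set I} (hbB : b ∈ B) (hb : b ∉ cl C)
    (hmin : ∀ b' ∈ B, b' ∉ cl C → b' ∈ cl (insert b C) → b ∈ cl (insert b' C))
    (h1 : Indep cl {a} C {b}) (h2 : Indep cl {a} (insert b C) B) :
    Indep cl {a} C B := by
  constructor
  · rintro x ⟨hxa, hxcl⟩
    have hx1 : x ∈ cl (B ∪ insert b C) :=
      hcl.mono _ _ (Set.union_subset_union_right B (Set.subset_insert b C)) hxcl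
    have hx2 : x ∈ cl (insert b C) := h2.1 ⟨hxa, hx1⟩
    have : x ∈ cl ({b} ∪ C) := by rwa [Set.singleton_union]
    exact h1.1 ⟨hxa, this⟩
  · rintro x ⟨hxB, hxcl⟩
    have hx1 : x ∈ cl ({a} ∪ insert b C) :=
      hcl.mono _ _ (Set.union_subset_union_right {a} (Set.subset_insert b C)) hxcl
    have hx2 : x ∈ cl (insert b C) := h2.2 ⟨hxB, hx1⟩
    by_contra hxC
    have hbx : b ∈ cl (insert x C) := hmin x hxB hxC hx2
    have hsub : insert x C ⊆ cl ({a} ∪ C) := by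
      intro y hy
      rcases hy with rfl | hy
      · exact hxcl
      · exact hcl.extensive _ (Or.inr hy)
    have : b ∈ cl ({a} ∪ C) := by
      have := hcl.mono _ _ hsub hbx
      rwa [hcl.idem] at this
    exact hb (h1.2 ⟨rfl, this⟩)

/-- (3) ⇒ (2): disjointifying over single elements gives disjointifying over finite sets. -/
theorem stmt_5 {P : Type*} [Group P] {I : Type*} [MulAction P I]
    (cl : Set I → Set I) (hcl : IsClosureOp cl) (hinv : ClInvariant P cl)
    (h : ∀ C : Set I, C.Finite → ∀ a b : I,
      ∃ a', ConjOver P C a a' ∧ Indep cl {a'} C {b}) :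
    ∀ B C : Set I, B.Finite → C.Finite → ∀ a : I,
      ∃ a', ConjOver P C a a' ∧ Indep cl {a'} C B := by
  classical
  suffices key : ∀ n : ℕ, ∀ B C : Set I, B.Finite → C.Finite → (B \ cl C).ncard ≤ n →
      ∀ a : I, ∃ a', ConjOver P C a a' ∧ Indep cl {a'} C B by
    intro B C hB hC a
    exact key _ B C hB hC le_rfl a
  intro n
  induction n with
  | zero =>
    intro B C hB hC hn a
    have hfin : (B \ cl C).Finite := hB.diff
    have hemp : B \ cl C = ∅ := by
      rw [← Set.ncard_eq_zero hfin]
      omega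
    have hBC : B ⊆ cl C := by
      intro x hx
      by_contra hxc
      exact absurd hemp (Set.nonempty_iff_ne_empty.mp ⟨x, hx, hxc⟩)
    exact ⟨a, ⟨1, fun c _ => one_smul P c, one_smul P a⟩, indep_of_subset_cl hcl hBC a⟩
  | succ n ih =>
    intro B C hB hC hn a
    have hfin : (B \ cl C).Finite := hB.diff
    by_cases hemp : B \ cl C = ∅
    · have h0 : (B \ cl C).ncard = 0 := (Set.ncard_eq_zero hfin).mpr hemp
      exact ih B C hB hC (by omega) a
    · -- find a minimal element b of B over C
      have hne : (hfin.toFinset).Nonempty := by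
        rw [Set.Finite.toFinset_nonempty]
        exact Set.nonempty_iff_ne_empty.mpr hemp
      obtain ⟨b, hbmem, hbmin⟩ := exists_min (fun x y => x ∈ cl (insert y C))
        (fun x => hcl.extensive _ (Set.mem_insert x C))
        (fun x y z hxy hyz => by
          have hsub : insert y C ⊆ cl (insert z C) := by
            intro w hw
            rcases hw with rfl | hw
            · exact hyz
            · exact hcl.extensive _ (Or.inr hw)
          have := hcl.mono _ _ hsub hxy
          rwa [hcl.idem] at this)
        hfin.toFinset hne
      rw [Set.Finite.mem_toFinset] at hbmem
      obtain ⟨hbB, hbC⟩ := hbmem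
      -- disjointify a from b over C
      obtain ⟨a₁, ⟨π₁, hπ₁C, hπ₁a⟩, hI1⟩ := h C hC a b
      -- cardinality drop
      have hsub2 : B \ cl (insert b C) ⊆ (B \ cl C) \ {b} := by
        rintro x ⟨hxB, hxcl⟩
        refine ⟨⟨hxB, fun hx => hxcl (hcl.mono _ _ (Set.subset_insert b C) hx)⟩, ?_⟩
        intro hx
        rw [Set.mem_singleton_iff] at hx
        subst hx
        exact hxcl (hcl.extensive _ (Set.mem_insert x C))
      have hcard : (B \ cl (insert b C)).ncard ≤ n := by
        have h1 : (B \ cl (insert b C)).ncard ≤ ((B \ cl C) \ {b}).ncard :=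
          Set.ncard_le_ncard hsub2 (hfin.diff)
        have h2 : ((B \ cl C) \ {b}).ncard < (B \ cl C).ncard :=
          Set.ncard_diff_singleton_lt_of_mem ⟨hbB, hbC⟩ hfin
        omega
      -- apply induction hypothesis over insert b C
      obtain ⟨a', ⟨π₂, hπ₂C, hπ₂a⟩, hI2⟩ := ih B (insert b C) hB (hC.insert b) hcard a₁
      refine ⟨a', ⟨π₂ * π₁, ?_, ?_⟩, ?_⟩
      · intro c hc
        rw [mul_smul, hπ₁C c hc, hπ₂C c (Set.mem_insert_of_mem b hc)]
      · rw [mul_smul, hπ₁a, hπ₂a]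
      · -- transfer hI1 along π₂, then weak transitivity
        have hI1' : Indep cl {a'} C {b} := by
          have := indep_image hinv π₂ hI1
          rwa [Set.image_singleton, Set.image_singleton, hπ₂a,
            hπ₂C b (Set.mem_insert b C),
            image_of_fix (fun c hc => hπ₂C c (Set.mem_insert_of_mem b hc))] at this
        exact wtrans hcl hbB hbC
          (fun b' hb'B hb'C hb' => hbmin b'
            (by rw [Set.Finite.mem_toFinset]; exact ⟨hb'B, hb'C⟩) hb')
          hI1' hI2
end

section
/- Let P ↷ I be a group action and cl an invariant closure operator on I with derived independence relation ⫫. Suppose that for any finite B, C ⊆ I and a ∈ I there is some a' ≅_C a with {a'} ⫫_C B. Then cl is disjointifying: for any finite A, B ⊇ C subsets of I, there exists a finite A' ⊆ I with A' ≅_C A and A' ⫫_C B. -/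
section Aux

variable {P : Type*} [Group P] {I : Type*} [MulAction P I]

/-- In a finite nonempty set with a transitive relation, there is a "minimal" element. -/
lemma aux_exists_min {α : Type*} (r : α → α → Prop)
    (htrans : ∀ {a b c : α}, r a b → r b c → r a c) :
    ∀ S : Finset α, S.Nonempty → ∃ m ∈ S, ∀ x ∈ S, r x m → r m x := by
  classical
  intro S
  induction S using Finset.induction_on with
  | empty => rintro ⟨x, hx⟩; simp at hx
  | @insert a S ha ih =>
    intro _
    rcases S.eq_empty_or_nonempty with rfl | hS
    · refine ⟨a, by simp, ?_⟩
      intro x hx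
      simp only [Finset.mem_insert, Finset.notMem_empty, or_false] at hx
      subst hx
      exact fun hra => hra
    · obtain ⟨m, hm, hmin⟩ := ih hS
      by_cases hc : r a m
      · by_cases hc2 : r m a
        · refine ⟨m, Finset.mem_insert_of_mem hm, ?_⟩
          intro x hx hxm
          rcases Finset.mem_insert.mp hx with rfl | hx'
          · exact hc2
          · exact hmin x hx' hxm
        · refine ⟨a, Finset.mem_insert_self a S, ?_⟩
          intro x hx hxa
          rcases Finset.mem_insert.mp hx with rfl | hx'
          · exact hxa
          · exact absurd (htrans (hmin x hx' (htrans hxa hc)) hxa) hc2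
      · refine ⟨m, Finset.mem_insert_of_mem hm, ?_⟩
        intro x hx hxm
        rcases Finset.mem_insert.mp hx with rfl | hx'
        · exact absurd hxm hc
        · exact hmin x hx' hxm

/-- Existence of a minimal element of a finite set over `C`. -/
lemma aux_exists_minimalOver {cl : Set I → Set I} (hcl : IsClosureOp cl)
    {A C : Set I} (hA : A.Finite) (hne : ¬ A ⊆ cl C) :
    ∃ a, MinimalOver cl A C a := by
  classical
  set r : I → I → Prop := fun x y => x ∈ cl (insert y C) with hr
  have htrans : ∀ {a b c : I}, r a b → r b c → r a c := by
    intro a b c hab hbc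
    have h1 : insert b C ⊆ cl (insert c C) := by
      refine Set.insert_subset hbc ?_
      exact (Set.subset_insert c C).trans (hcl.extensive _)
    have h2 : cl (insert b C) ⊆ cl (insert c C) := by
      have := hcl.mono _ _ h1
      rwa [hcl.idem] at this
    exact h2 hab
  have hSfin : (A \ cl C).Finite := hA.diff
  have hSne : (A \ cl C).Nonempty := by
    rcases Set.not_subset.mp hne with ⟨a, haA, haC⟩
    exact ⟨a, haA, haC⟩
  have hSne' : hSfin.toFinset.Nonempty := by
    rwa [Set.Finite.toFinset_nonempty]
  obtain ⟨m, hm, hmin⟩ := aux_exists_min r htrans hSfin.toFinset hSne'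
  rw [Set.Finite.mem_toFinset] at hm
  refine ⟨m, hm, ?_⟩
  intro b' hb'
  have hb'S : b' ∈ hSfin.toFinset := by
    rw [Set.Finite.mem_toFinset]
    exact ⟨hb'.1.1, hb'.2⟩
  exact hmin b' hb'S hb'.1.2

/-- Pointwise-fixed sets have identity image. -/
lemma aux_image_fix (π : P) {C : Set I} (hfix : ∀ c ∈ C, π • c = c) :
    (fun x => π • x) '' C = C := by
  ext y
  constructor
  · rintro ⟨c, hc, rfl⟩
    show π • c ∈ C
    rw [hfix c hc]; exact hc
  · intro hy
    exact ⟨y, hy, hfix y hy⟩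

lemma aux_smul_mem_cl_iff {cl : Set I → Set I} (hinv : ClInvariant P cl)
    (π : P) {A : Set I} {x : I} :
    π • x ∈ cl ((fun y => π • y) '' A) ↔ x ∈ cl A := by
  constructor
  · intro hx
    rw [← hinv] at hx
    rcases hx with ⟨y, hy, hyx⟩
    have : y = x := smul_left_cancel π hyx
    rwa [← this]
  · intro hx
    rw [← hinv]
    exact ⟨x, hx, rfl⟩

lemma aux_smul_mem_cl_fix_iff {cl : Set I → Set I} (hinv : ClInvariant P cl)
    (π : P) {C : Set I} (hfix : ∀ c ∈ C, π • c = c) {x : I} :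
    π • x ∈ cl C ↔ x ∈ cl C := by
  conv_lhs => rw [← aux_image_fix π hfix]
  exact aux_smul_mem_cl_iff hinv π

/-- `MinimalOver` is preserved by the group action over a fixed base. -/
lemma aux_minimalOver_image {cl : Set I → Set I} (hinv : ClInvariant P cl)
    (π : P) {A C : Set I} {a : I} (hfix : ∀ c ∈ C, π • c = c)
    (hmin : MinimalOver cl A C a) :
    MinimalOver cl ((fun x => π • x) '' A) C (π • a) := by
  have himg : ∀ b : I, (fun x => π • x) '' (insert b C) = insert (π • b) C := by
    intro b
    rw [Set.image_insert_eq, aux_image_fix π hfix]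
  constructor
  · refine ⟨⟨a, hmin.1.1, rfl⟩, ?_⟩
    rw [aux_smul_mem_cl_fix_iff hinv π hfix]
    exact hmin.1.2
  · rintro b' ⟨⟨hb'A, hb'cl⟩, hb'C⟩
    rcases hb'A with ⟨b, hbA, rfl⟩
    have hb1 : b ∈ cl (insert a C) := by
      rw [← aux_smul_mem_cl_iff hinv π, himg a]
      exact hb'cl
    have hb2 : b ∉ cl C := by
      rwa [aux_smul_mem_cl_fix_iff hinv π hfix] at hb'C
    have := hmin.2 b ⟨⟨hbA, hb1⟩, hb2⟩
    rw [← aux_smul_mem_cl_iff hinv π, himg b] at this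
    exact this

/-- Trivial independence when `A ⊆ cl C`. -/
lemma aux_indep_of_subset_cl {cl : Set I → Set I} (hcl : IsClosureOp cl)
    {A B C : Set I} (hsub : A ⊆ cl C) : Indep cl A C B := by
  constructor
  · exact fun x hx => hsub hx.1
  · intro x hx
    have h1 : A ∪ C ⊆ cl C := Set.union_subset hsub (hcl.extensive C)
    have h2 : cl (A ∪ C) ⊆ cl C := by
      have := hcl.mono _ _ h1
      rwa [hcl.idem] at this
    exact h2 hx.2

/-- The main induction. -/
lemma aux_main {cl : Set I → Set I} (hcl : IsClosureOp cl) (hinv : ClInvariant P cl)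
    (h : ∀ B C : Set I, B.Finite → C.Finite → ∀ a : I,
      ∃ a', ConjOver P C a a' ∧ Indep cl {a'} C B) :
    ∀ n : ℕ, ∀ A B C : Set I, A.Finite → B.Finite → C.Finite → C ⊆ A → C ⊆ B →
      (A \ cl C).ncard ≤ n →
      ∃ A' : Set I, A'.Finite ∧ ConjSetOver P C A A' ∧ Indep cl A' C B := by
  intro n
  induction n with
  | zero =>
    intro A B C hA hB hC hCA hCB hcard
    have hempty : A \ cl C = ∅ := by
      have := (Set.ncard_eq_zero (hA.diff)).mp (Nat.le_zero.mp hcard)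
      exact this
    have hsub : A ⊆ cl C := by
      intro x hx
      by_contra hx'
      have hmem : x ∈ A \ cl C := ⟨hx, hx'⟩
      rw [hempty] at hmem
      exact hmem
    exact ⟨A, hA, ⟨1, fun c _ => one_smul P c, by simp⟩, aux_indep_of_subset_cl hcl hsub⟩
  | succ n ih =>
    intro A B C hA hB hC hCA hCB hcard
    by_cases hsub : A ⊆ cl C
    · exact ⟨A, hA, ⟨1, fun c _ => one_smul P c, by simp⟩, aux_indep_of_subset_cl hcl hsub⟩
    · obtain ⟨a, hminA⟩ := aux_exists_minimalOver hcl hA hsub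
      obtain ⟨a', ⟨σ, hσfix, hσa⟩, hα⟩ := h B C hB hC a
      set A₁ : Set I := (fun x => σ • x) '' A with hA₁
      set C' : Set I := insert a' C with hC'
      set B' : Set I := insert a' B with hB'
      have hminA₁ : MinimalOver cl A₁ C a' := by
        rw [← hσa]
        exact aux_minimalOver_image hinv σ hσfix hminA
      have ha'A₁ : a' ∈ A₁ := hminA₁.1.1
      have ha'nC : a' ∉ cl C := hminA₁.1.2
      -- cardinality decrease
      have hcard' : (A₁ \ cl C').ncard ≤ n := by
        set T : Set I := (fun x => σ • x) '' (A \ cl C) with hT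
        have hTfin : T.Finite := (hA.diff).image _
        have ha'T : a' ∈ T := ⟨a, hminA.1, hσa⟩
        have hsub2 : A₁ \ cl C' ⊆ T \ {a'} := by
          rintro y ⟨⟨x, hxA, rfl⟩, hy⟩
          have hyC : σ • x ∉ cl C := fun hc => hy (hcl.mono _ _ (Set.subset_insert a' C) hc)
          have hxC : x ∉ cl C := fun hc =>
            hyC ((aux_smul_mem_cl_fix_iff hinv σ hσfix).mpr hc)
          refine ⟨⟨x, ⟨hxA, hxC⟩, rfl⟩, ?_⟩
          intro hcontra
          apply hy
          rw [Set.mem_singleton_iff] at hcontra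
          rw [hcontra]
          exact hcl.extensive _ (Set.mem_insert a' C)
        have h1 : (A₁ \ cl C').ncard ≤ (T \ {a'}).ncard :=
          Set.ncard_le_ncard hsub2 (hTfin.diff)
        have h2 : (T \ {a'}).ncard < T.ncard :=
          Set.ncard_diff_singleton_lt_of_mem ha'T hTfin
        have h3 : T.ncard = (A \ cl C).ncard :=
          Set.ncard_image_of_injective _ (MulAction.injective σ)
        omega
      have hC'A₁ : C' ⊆ A₁ := by
        rw [hC']
        refine Set.insert_subset ha'A₁ ?_
        intro c hc
        exact ⟨c, hCA hc, hσfix c hc⟩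
      have hC'B' : C' ⊆ B' := Set.insert_subset_insert hCB
      obtain ⟨A', hA'fin, ⟨τ, hτfix, hτim⟩, hβ⟩ :=
        ih A₁ B' C' (hA.image _) (hB.insert a') (hC.insert a') hC'A₁ hC'B' hcard'
      have hτC : ∀ c ∈ C, τ • c = c := fun c hc => hτfix c (Set.mem_insert_of_mem a' hc)
      have hτa' : τ • a' = a' := hτfix a' (Set.mem_insert a' C)
      have ha'A' : a' ∈ A' := by
        rw [← hτim]
        exact ⟨a', ha'A₁, hτa'⟩
      have hminA' : MinimalOver cl A' C a' := by
        rw [← hτim, ← hτa']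
        exact aux_minimalOver_image hinv τ hτC hminA₁
      refine ⟨A', hA'fin, ⟨τ * σ, ?_, ?_⟩, ?_, ?_⟩
      · intro c hc
        rw [mul_smul, hσfix c hc, hτC c hc]
      · rw [← hτim, hA₁, Set.image_image]
        simp only [mul_smul]
      · -- Part 1 : A' ∩ cl (B ∪ C) ⊆ cl C
        rintro x ⟨hxA', hxcl⟩
        have hx1 : x ∈ cl C' := by
          refine hβ.1 ⟨hxA', ?_⟩
          refine hcl.mono _ _ ?_ hxcl
          exact Set.union_subset_union (Set.subset_insert a' B) (Set.subset_insert a' C)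
        by_cases hxC : x ∈ cl C
        · exact hxC
        · exfalso
          have hmin2 : a' ∈ cl (insert x C) := hminA'.2 x ⟨⟨hxA', hx1⟩, hxC⟩
          have hins : insert x C ⊆ cl (B ∪ C) :=
            Set.insert_subset hxcl
              (fun c hc => hcl.extensive _ (Set.mem_union_right B hc))
          have : cl (insert x C) ⊆ cl (B ∪ C) := by
            have := hcl.mono _ _ hins
            rwa [hcl.idem] at this
          exact ha'nC (hα.1 ⟨rfl, this hmin2⟩)
      · -- Part 2 : B ∩ cl (A' ∪ C) ⊆ cl C
        rintro x ⟨hxB, hxcl⟩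
        have hx1 : x ∈ cl C' := by
          refine hβ.2 ⟨Set.mem_insert_of_mem a' hxB, ?_⟩
          refine hcl.mono _ _ ?_ hxcl
          exact Set.union_subset_union_right A' (Set.subset_insert a' C)
        have : x ∈ cl ({a'} ∪ C) := by rwa [Set.singleton_union]
        exact hα.2 ⟨hxB, this⟩

end Aux

/-- (2) ⇒ (1): if single points can be moved independent of any finite set,
then `cl` is disjointifying. -/
theorem stmt_6 {P : Type*} [Group P] {I : Type*} [MulAction P I]
    (cl : Set I → Set I) (hcl : IsClosureOp cl) (hinv : ClInvariant P cl)
    (h : ∀ B C : Set I, B.Finite → C.Finite → ∀ a : I,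
      ∃ a', ConjOver P C a a' ∧ Indep cl {a'} C B) :
    ∀ A B C : Set I, A.Finite → B.Finite → C.Finite → C ⊆ A → C ⊆ B →
      ∃ A' : Set I, A'.Finite ∧ ConjSetOver P C A A' ∧ Indep cl A' C B := by
  intro A B C hA hB hC hCA hCB
  exact aux_main hcl hinv h (A \ cl C).ncard A B C hA hB hC hCA hCB le_rfl
end

section
/- Let P ↷ I be a group action and cl an invariant closure operator on I. Suppose for any finite C ⊆ I and a, b ∈ I with a ∉ cl(C): (a) there is some a' ≅_C a with {a'} ⫫_C {a}, and (b) there is some a' ≅_C a with a' ∉ cl({b} ∪ C). Then for any finite C ⊆ I and a, b ∈ I, there is some a' ≅_C a with {a'} ⫫_C {b}. -/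
/-!
Suppose first that `b ∉ cl(a C)`. If also `a ∉ cl(b C)`, then `a` itself is the required
conjugate. Otherwise `a ∈ cl(b C)`. Take a conjugate `x ≅_C a` with `{x} ⫫_C {a}` and move `x` by
some `σ` fixing `a C` to a point `x' = σ x` outside `cl(b a C)`. If `b ∈ cl(x' C)`, then
`a ∈ cl(x' C)` by transitivity, and pulling back along `σ` (which fixes `a`) gives `a ∈ cl(x C)`,
contradicting independence. So `x'` is the required conjugate. The general case reduces to this
one by first moving `b` off `cl(a C)` with (b).
-/

namespace IsClosureOp

variable {I : Type*} {cl : Set I → Set I}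

theorem cl_subset_of_subset (hcl : IsClosureOp cl) {A B : Set I} (h : A ⊆ cl B) : cl A ⊆ cl B := by
  simpa only [hcl.idem] using hcl.mono _ _ h

theorem mem_of_mem_cl_insert (hcl : IsClosureOp cl) {T : Set I} {x y : I} (hy : y ∈ cl T)
    (hx : x ∈ cl (insert y T)) : x ∈ cl T :=
  hcl.cl_subset_of_subset (Set.insert_subset hy (hcl.extensive T)) hx

theorem mem_cl_insert_trans (hcl : IsClosureOp cl) {C : Set I} {x y z : I}
    (hxy : x ∈ cl (insert y C)) (hyz : y ∈ cl (insert z C)) : x ∈ cl (insert z C) :=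
  hcl.mem_of_mem_cl_insert hyz
    (hcl.mono _ _ (Set.insert_subset_insert (Set.subset_insert z C)) hxy)

end IsClosureOp

namespace Indep

variable {I : Type*} {cl : Set I → Set I} {C : Set I} {x y : I}

theorem symm {A B : Set I} (h : Indep cl A C B) : Indep cl B C A :=
  And.symm h

theorem singleton_iff :
    Indep cl {x} C {y} ↔
      (x ∈ cl (insert y C) → x ∈ cl C) ∧ (y ∈ cl (insert x C) → y ∈ cl C) := by
  simp [Indep, Set.subset_def]

theorem singleton_of_notMem (hx : x ∉ cl (insert y C)) (hy : y ∉ cl (insert x C)) :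
    Indep cl {x} C {y} :=
  singleton_iff.mpr ⟨fun h => absurd h hx, fun h => absurd h hy⟩

theorem singleton_of_mem_cl (hcl : IsClosureOp cl) (hy : y ∈ cl C) : Indep cl {x} C {y} :=
  singleton_iff.mpr ⟨hcl.mem_of_mem_cl_insert hy, fun _ => hy⟩

theorem notMem_cl_insert_left (h : Indep cl {x} C {y}) (hx : x ∉ cl C) :
    x ∉ cl (insert y C) :=
  fun hm => hx ((singleton_iff.mp h).1 hm)

end Indep

section Action

variable {P : Type*} [Group P] {I : Type*} [MulAction P I] {cl : Set I → Set I} {C : Set I}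

theorem inv_smul_fix {π : P} (hπ : ∀ c ∈ C, π • c = c) : ∀ c ∈ C, π⁻¹ • c = c :=
  fun c hc => inv_smul_eq_iff.mpr (hπ c hc).symm

theorem image_smul_eq_self {π : P} (hπ : ∀ c ∈ C, π • c = c) : (fun x => π • x) '' C = C :=
  (Set.image_congr hπ).trans (Set.image_id' C)

namespace ClInvariant

theorem smul_mem_cl_image_iff (hinv : ClInvariant P cl) (π : P) {S : Set I} {x : I} :
    π • x ∈ cl ((fun y => π • y) '' S) ↔ x ∈ cl S := by
  rw [← hinv]
  exact (MulAction.injective π).mem_set_image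

theorem smul_mem_cl_iff (hinv : ClInvariant P cl) {π : P} (hπ : ∀ c ∈ C, π • c = c) {x : I} :
    π • x ∈ cl C ↔ x ∈ cl C := by
  conv_lhs => rw [← image_smul_eq_self hπ]
  exact hinv.smul_mem_cl_image_iff π

theorem smul_mem_cl_insert_iff (hinv : ClInvariant P cl) {π : P} (hπ : ∀ c ∈ C, π • c = c)
    {s x : I} :
    π • x ∈ cl (insert (π • s) C) ↔ x ∈ cl (insert s C) := by
  rw [← image_smul_eq_self hπ, ← Set.image_insert_eq, hinv.smul_mem_cl_image_iff π,
    image_smul_eq_self hπ]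

end ClInvariant

namespace ConjOver

theorem refl (a : I) : ConjOver P C a a :=
  ⟨1, fun c _ => one_smul P c, one_smul P a⟩

theorem trans {a b c : I} (hab : ConjOver P C a b) (hbc : ConjOver P C b c) :
    ConjOver P C a c := by
  obtain ⟨π, hπ, rfl⟩ := hab
  obtain ⟨ρ, hρ, rfl⟩ := hbc
  exact ⟨ρ * π, fun c hc => by rw [mul_smul, hπ c hc, hρ c hc], mul_smul ρ π a⟩

theorem notMem_cl (hinv : ClInvariant P cl) {a a' : I} (h : ConjOver P C a a')
    (ha : a ∉ cl C) : a' ∉ cl C := by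
  obtain ⟨π, hπ, rfl⟩ := h
  rwa [hinv.smul_mem_cl_iff hπ]

end ConjOver

theorem exists_conjOver_indep_of_notMem_cl_insert (hcl : IsClosureOp cl)
    (hinv : ClInvariant P cl) {a b : I} (ha : a ∉ cl C)
    (hself : ∃ x, ConjOver P C a x ∧ Indep cl {x} C {a})
    (havoid : ∀ x, x ∉ cl (insert a C) →
      ∃ x', ConjOver P (insert a C) x x' ∧ x' ∉ cl (insert b (insert a C)))
    (hba : b ∉ cl (insert a C)) :
    ∃ a', ConjOver P C a a' ∧ Indep cl {a'} C {b} := by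
  by_cases hab : a ∈ cl (insert b C)
  swap
  · exact ⟨a, .refl a, .singleton_of_notMem hab hba⟩
  obtain ⟨x, hx, hxa⟩ := hself
  have hxC : x ∉ cl C := hx.notMem_cl hinv ha
  have hax : a ∉ cl (insert x C) := hxa.symm.notMem_cl_insert_left ha
  obtain ⟨x', ⟨σ, hσ, rfl⟩, hx'⟩ := havoid x (hxa.notMem_cl_insert_left hxC)
  have hσC : ∀ c ∈ C, σ • c = c := fun c hc => hσ c (Set.mem_insert_of_mem a hc)
  have hx'b : σ • x ∉ cl (insert b C) := fun hm =>
    hx' (hcl.mono _ _ (Set.insert_subset_insert (Set.subset_insert a C)) hm)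
  refine ⟨σ • x, hx.trans ⟨σ, hσC, rfl⟩, .singleton_of_notMem hx'b fun hb => hax ?_⟩
  rw [← hinv.smul_mem_cl_insert_iff hσC, hσ a (Set.mem_insert a C)]
  exact hcl.mem_cl_insert_trans hab hb

end Action

/-- (4) ⇒ (3) in the characterization of disjointifying closure operators. -/
theorem stmt_7 {P : Type*} [Group P] {I : Type*} [MulAction P I]
    (cl : Set I → Set I) (hcl : IsClosureOp cl) (hinv : ClInvariant P cl)
    (h : ∀ C : Set I, C.Finite → ∀ a b : I, a ∉ cl C →
      (∃ a', ConjOver P C a a' ∧ Indep cl {a'} C {a}) ∧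
      (∃ a', ConjOver P C a a' ∧ a' ∉ cl (insert b C))) :
    ∀ C : Set I, C.Finite → ∀ a b : I,
      ∃ a', ConjOver P C a a' ∧ Indep cl {a'} C {b} := by
  intro C hC a b
  by_cases ha : a ∈ cl C
  · exact ⟨a, .refl a, (Indep.singleton_of_mem_cl hcl ha).symm⟩
  by_cases hb : b ∈ cl C
  · exact ⟨a, .refl a, .singleton_of_mem_cl hcl hb⟩
  obtain ⟨-, _, ⟨ρ, hρ, rfl⟩, hb'⟩ := h C hC b a hb
  have ha₀ : ConjOver P C a (ρ⁻¹ • a) := ⟨ρ⁻¹, inv_smul_fix hρ, rfl⟩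
  have hba₀ : b ∉ cl (insert (ρ⁻¹ • a) C) := by
    rwa [← hinv.smul_mem_cl_insert_iff hρ, smul_inv_smul]
  obtain ⟨a', ha', hind⟩ := exists_conjOver_indep_of_notMem_cl_insert hcl hinv
    (ha₀.notMem_cl hinv ha) (h C hC _ b (ha₀.notMem_cl hinv ha)).1
    (fun x hx => (h _ (hC.insert _) x b hx).2) hba₀
  exact ⟨a', ha₀.trans ha', hind⟩
end
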